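/- arXiv:2002.04325 — 6 statements merged into one kernel-verified Lean document; each statement's English description precedes it below -/
import Mathlib

section
/- Let F be a field, n ≥ 1, and T_n the ring of lower triangular n×n matrices over F. For A, B ∈ T_n, the cyclic submodule T_n(A,B) = {(RA, RB) : R ∈ T_n} of the free left module ²T_n is free (i.e., R ∈ T_n with RA = 0 and RB = 0 implies R = 0) if and only if the rank of the n×(2n) matrix [A|B] equals n. -/
/-- The subring `T_n` of lower triangular `n × n` matrices over a field `F`:
matrices `A` with `A i j = 0` whenever `i < j`. -/
def Tri (F : Type*) [Field F] (n : ℕ) : Subring (Matrix (Fin n) (Fin n) F) where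
  carrier := {A | ∀ i j : Fin n, i < j → A i j = 0}
  zero_mem' := fun i j _ => rfl
  one_mem' := fun i j hij => Matrix.one_apply_ne (ne_of_lt hij)
  add_mem' := fun {a b} ha hb i j hij => by
    simp [Matrix.add_apply, ha i j hij, hb i j hij]
  neg_mem' := fun {a} ha i j hij => by
    simp [Matrix.neg_apply, ha i j hij]
  mul_mem' := fun {a b} ha hb i j hij => by
    rw [Matrix.mul_apply]
    apply Finset.sum_eq_zero
    intro k _
    rcases lt_or_ge i k with h | h
    · rw [ha i k h, zero_mul]
    · rw [hb k j (lt_of_le_of_lt h hij), mul_zero]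

/-! Both conditions say that no nonzero row vector `v` has `v A = v B = 0`. For the rank this is
row independence of `[A|B]`. For freeness: every row of an annihilator `R` is such a vector, and
conversely such a `v` may be placed as the last row of an otherwise zero matrix, which is lower
triangular because the last row of a lower triangular matrix is unconstrained. -/

open Matrix

theorem Matrix.rank_eq_card_iff_forall_vecMul_eq_zero {R m n : Type*} [Field R] [Fintype m]
    [Fintype n] (M : Matrix m n R) :
    M.rank = Fintype.card m ↔ ∀ v : m → R, v ᵥ* M = 0 → v = 0 := by
  rw [M.rank_eq_finrank_span_row, ← Set.finrank, eq_comm,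
    ← linearIndependent_iff_card_eq_finrank_span,
    ← vecMul_injective_iff, ← coe_vecMulLinear,
    injective_iff_map_eq_zero]
  rfl

theorem updateRow_zero_last_mem_tri {F : Type*} [Field F] {m : ℕ} (v : Fin (m + 1) → F) :
    (0 : Matrix (Fin (m + 1)) (Fin (m + 1)) F).updateRow (Fin.last m) v ∈ Tri F (m + 1) := by
  intro i j hij
  have hi : i ≠ Fin.last m := (hij.trans_le (Fin.le_last j)).ne
  simp [updateRow_ne hi]

theorem forall_tri_mul_eq_zero_iff_forall_vecMul_eq_zero {F : Type*} [Field F] {n : ℕ}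
    {k : Type*} (M : Matrix (Fin n) k F) :
    (∀ R ∈ Tri F n, R * M = 0 → R = 0) ↔ ∀ v : Fin n → F, v ᵥ* M = 0 → v = 0 := by
  constructor
  · intro h v hv
    ext j
    obtain ⟨m, rfl⟩ : ∃ m, n = m + 1 := Nat.exists_eq_succ_of_ne_zero j.pos.ne'
    have hR := h _ (updateRow_zero_last_mem_tri v) (by simp [updateRow_mul, hv])
    simpa using congr_fun₂ hR (Fin.last m) j
  · intro h R _ hRM
    funext i
    exact h _ (congr_fun hRM i)

theorem free_cyclic_iff_rank_eq_triangular_general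
    {F : Type*} [Field F] {n : ℕ} (A B : Tri F n) :
    (∀ R : Tri F n, R * A = 0 → R * B = 0 → R = 0) ↔
      (Matrix.fromCols (A : Matrix (Fin n) (Fin n) F)
        (B : Matrix (Fin n) (Fin n) F)).rank = n := by
  have hrank := rank_eq_card_iff_forall_vecMul_eq_zero
    (fromCols (A : Matrix (Fin n) (Fin n) F) (B : Matrix (Fin n) (Fin n) F))
  rw [Fintype.card_fin] at hrank
  rw [hrank, ← forall_tri_mul_eq_zero_iff_forall_vecMul_eq_zero, Subtype.forall]
  simp only [mul_fromCols, ← fromCols_zero, fromCols_inj.eq_iff, Subtype.ext_iff,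
    Subring.coe_mul, ZeroMemClass.coe_zero, and_imp]

/-- Let `F` be a field, `n ≥ 1`, and `T_n` the ring of lower triangular
`n × n` matrices over `F`.  For `A, B ∈ T_n`, the cyclic submodule
`T_n(A,B) = {(RA, RB) : R ∈ T_n}` of the free left module `²T_n` is free
(i.e. `R ∈ T_n` with `RA = 0` and `RB = 0` implies `R = 0`) if and only if the rank of the
`n × 2n` matrix `[A|B]` equals `n`. -/
theorem free_cyclic_iff_rank_eq_triangular
    {F : Type*} [Field F] {n : ℕ} (hn : 1 ≤ n) (A B : Tri F n) :
    (∀ R : Tri F n, R * A = 0 → R * B = 0 → R = 0) ↔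
      (Matrix.fromCols (A : Matrix (Fin n) (Fin n) F)
        (B : Matrix (Fin n) (Fin n) F)).rank = n :=
  free_cyclic_iff_rank_eq_triangular_general A B
end

section
/- Let F be a field, n ≥ 1, and T_n the ring of lower triangular n×n matrices over F. A pair (A,B) ∈ ²T_n is unimodular, i.e., there exist X, Y ∈ T_n such that AX + BY is an invertible matrix (equivalently, a unit of T_n, since the inverse of an invertible lower triangular matrix is again lower triangular), if and only if for every index i one has A i i ≠ 0 or B i i ≠ 0. -/
lemma exists_mul_add_mul_ne_zero {R : Type*} [Semiring R] {a b : R} (h : a ≠ 0 ∨ b ≠ 0) :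
    ∃ x y : R, a * x + b * y ≠ 0 := by
  rcases h with ha | hb
  · exact ⟨1, 0, by simpa using ha⟩
  · exact ⟨0, 1, by simpa using hb⟩

namespace Tri

variable {F : Type*} [Field F] {n : ℕ}

lemma isLowerTriangular (A : Tri F n) : A.val.IsLowerTriangular :=
  fun i j h => A.2 i j h

lemma mul_apply_self (A X : Tri F n) (i : Fin n) :
    (A * X).val i i = A.val i i * X.val i i := by
  rw [Subring.coe_mul, Matrix.mul_apply]
  refine Finset.sum_eq_single_of_mem i (Finset.mem_univ i) fun k _ hk => ?_
  rcases lt_or_gt_of_ne hk with h | h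
  · rw [X.2 k i h, mul_zero]
  · rw [A.2 i k h, zero_mul]

lemma mul_add_mul_apply_self (A B X Y : Tri F n) (i : Fin n) :
    (A * X + B * Y).val i i = A.val i i * X.val i i + B.val i i * Y.val i i := by
  rw [Subring.coe_add, Matrix.add_apply, mul_apply_self, mul_apply_self]

lemma isUnit_iff_isUnit_val (A : Tri F n) : IsUnit A ↔ IsUnit A.val := by
  refine ⟨fun hA => hA.map (Tri F n).subtype, fun hA => ?_⟩
  have hdet := (Matrix.isUnit_iff_isUnit_det _).1 hA
  have := A.val.invertibleOfIsUnitDet hdet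
  have hinv : A.val⁻¹ ∈ Tri F n := fun i j hij =>
    Matrix.blockTriangular_inv_of_blockTriangular (isLowerTriangular A) hij
  exact isUnit_iff_exists.2 ⟨⟨A.val⁻¹, hinv⟩, Subtype.ext (Matrix.mul_nonsing_inv _ hdet),
    Subtype.ext (Matrix.nonsing_inv_mul _ hdet)⟩

lemma isUnit_iff (A : Tri F n) : IsUnit A ↔ ∀ i, A.val i i ≠ 0 := by
  rw [isUnit_iff_isUnit_val, Matrix.isUnit_iff_isUnit_det, isUnit_iff_ne_zero,
    Matrix.det_of_isLowerTriangular _ (isLowerTriangular A), Finset.prod_ne_zero_iff]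
  simp only [Finset.mem_univ, true_imp_iff]

def diagonal (d : Fin n → F) : Tri F n :=
  ⟨Matrix.diagonal d, fun _ _ h => Matrix.diagonal_apply_ne _ h.ne⟩

@[simp]
lemma diagonal_apply_self (d : Fin n → F) (i : Fin n) : (diagonal d).val i i = d i :=
  Matrix.diagonal_apply_eq d i

end Tri

theorem unimodular_iff_diagonal_general
    {F : Type*} [Field F] {n : ℕ} (A B : Tri F n) :
    (∃ X Y : Tri F n, IsUnit (A * X + B * Y)) ↔
      ∀ i : Fin n, A.val i i ≠ 0 ∨ B.val i i ≠ 0 := by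
  constructor
  · rintro ⟨X, Y, hU⟩ i
    have hi := (Tri.isUnit_iff _).1 hU i
    rw [Tri.mul_add_mul_apply_self] at hi
    contrapose! hi
    simp [hi.1, hi.2]
  · intro h
    choose x y hxy using fun i => exists_mul_add_mul_ne_zero (h i)
    refine ⟨Tri.diagonal x, Tri.diagonal y, (Tri.isUnit_iff _).2 fun i => ?_⟩
    simpa [Tri.mul_add_mul_apply_self] using hxy i

/-- A pair `(A,B) ∈ ²T_n` is unimodular, i.e. there exist `X, Y ∈ T_n`
such that `AX + BY` is a unit of `T_n` (equivalently, an invertible matrix, since the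
inverse of an invertible lower triangular matrix is again lower triangular), if and only
if for every index `i` one has `A i i ≠ 0` or `B i i ≠ 0`. -/
theorem unimodular_iff_diagonal
    {F : Type*} [Field F] {n : ℕ} (hn : 1 ≤ n) (A B : Tri F n) :
    (∃ X Y : Tri F n, IsUnit (A * X + B * Y)) ↔
      ∀ i : Fin n, A.val i i ≠ 0 ∨ B.val i i ≠ 0 :=
  unimodular_iff_diagonal_general A B
end

section
/- Let F be a field, n ≥ 1, and T_n the ring of lower triangular n×n matrices over F. A pair (A,B) ∈ ²T_n is an outlier generating a free cyclic submodule (i.e., (A,B) belongs to no cyclic submodule T_n(C,D) with (C,D) unimodular, and the cyclic submodule T_n(A,B) is free) if and only if (A,B) is not unimodular and the rank of the n×(2n) matrix [A|B] equals n. -/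
/-- The cyclic left submodule `T_n(A,B) = {(RA, RB) : R ∈ T_n}` of `²T_n`. -/
def cyc {F : Type*} [Field F] {n : ℕ} (A B : Tri F n) : Set (Tri F n × Tri F n) :=
  {p | ∃ R : Tri F n, p = (R * A, R * B)}

/-- A pair `(A,B) ∈ ²T_n` is unimodular if there are `X, Y ∈ T_n` with `AX + BY`
a unit of `T_n`. -/
def Unimodular {F : Type*} [Field F] {n : ℕ} (A B : Tri F n) : Prop :=
  ∃ X Y : Tri F n, IsUnit (A * X + B * Y)

/-- A pair `(A,B) ∈ ²T_n` is an outlier if it belongs to no cyclic submodule generated by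
a unimodular pair. -/
def Outlier {F : Type*} [Field F] {n : ℕ} (A B : Tri F n) : Prop :=
  ¬ ∃ C D : Tri F n, Unimodular C D ∧ (A, B) ∈ cyc C D

namespace Matrix

variable {K m n n₁ n₂ : Type*} [Field K] [Fintype m]

theorem rank_eq_card_height_iff [Fintype n] (M : Matrix m n K) :
    M.rank = Fintype.card m ↔ LinearIndependent K M.row := by
  rw [rank_eq_finrank_span_row, linearIndependent_iff_card_eq_finrank_span, Set.finrank, eq_comm]

theorem rank_fromCols_eq_card_height_iff [Fintype n₁] [Fintype n₂] (A : Matrix m n₁ K)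
    (B : Matrix m n₂ K) :
    (fromCols A B).rank = Fintype.card m ↔ ∀ v : m → K, v ᵥ* A = 0 → v ᵥ* B = 0 → v = 0 := by
  rw [rank_eq_card_height_iff, ← vecMul_injective_iff, ← coe_vecMulLinear,
    injective_iff_map_eq_zero]
  simp only [coe_vecMulLinear, vecMul_fromCols, ← Sum.elim_zero_zero, Sum.elim_eq_iff, and_imp]

theorem isUnit_of_rank_mul_eq_card_height [Fintype n] [DecidableEq m] {R : Matrix m m K}
    {M : Matrix m n K} (h : (R * M).rank = Fintype.card m) : IsUnit R := by
  have hR : R.rank = Fintype.card m :=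
    le_antisymm R.rank_le_card_height (h ▸ rank_mul_le_left R M)
  exact linearIndependent_rows_iff_isUnit.mp ((rank_eq_card_height_iff R).mp hR)

end Matrix

open Matrix

section

variable {F : Type*} [Field F] {n : ℕ}

theorem Tri.isUnit_of_isUnit_coe {R : Tri F n} (h : IsUnit (R : Matrix (Fin n) (Fin n) F)) :
    IsUnit R := by
  let _ := h.invertible
  have hR : BlockTriangular (R : Matrix (Fin n) (Fin n) F) OrderDual.toDual :=
    fun i j hij => R.2 i j hij
  have hinv : (R : Matrix (Fin n) (Fin n) F)⁻¹ ∈ Tri F n :=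
    fun i j hij => blockTriangular_inv_of_blockTriangular hR hij
  exact ⟨⟨R, ⟨_, hinv⟩, Subtype.ext (mul_inv_of_invertible _),
    Subtype.ext (inv_mul_of_invertible _)⟩, rfl⟩

def FreeCyclic (A B : Tri F n) : Prop :=
  ∀ R : Tri F n, R * A = 0 → R * B = 0 → R = 0

theorem freeCyclic_iff_vecMul (A B : Tri F n) :
    FreeCyclic A B ↔ ∀ v : Fin n → F,
      v ᵥ* (A : Matrix (Fin n) (Fin n) F) = 0 → v ᵥ* (B : Matrix (Fin n) (Fin n) F) = 0 →
        v = 0 := by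
  refine ⟨fun h v hA hB => ?_, fun h R hA hB => ?_⟩
  · cases n with
    | zero => exact Subsingleton.elim _ _
    | succ m =>
      -- the lower triangular matrix whose last row is `v` and whose other rows vanish
      have hmem : vecMulVec (Pi.single (Fin.last m) 1) v ∈ Tri F (m + 1) := fun i j hij => by
        have hi : i ≠ Fin.last m := Fin.lt_last_iff_ne_last.mp (hij.trans_le (Fin.le_last j))
        rw [vecMulVec_apply, Pi.single_eq_of_ne hi, zero_mul]
      have hR := h ⟨_, hmem⟩ (Subtype.ext ?_) (Subtype.ext ?_)
      · funext j
        simpa [vecMulVec_apply] using congr_fun₂ (congrArg Subtype.val hR) (Fin.last m) j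
      · simp [vecMulVec_mul, hA]
      · simp [vecMulVec_mul, hB]
  · ext i j
    have hrow (M : Tri F n) (hM : R * M = 0) :
        (R : Matrix (Fin n) (Fin n) F) i ᵥ* (M : Matrix (Fin n) (Fin n) F) = 0 :=
      congr_fun (congrArg Subtype.val hM) i
    exact congr_fun (h _ (hrow A hA) (hrow B hB)) j

theorem freeCyclic_iff_rank_fromCols_eq (A B : Tri F n) :
    FreeCyclic A B ↔
      (fromCols (A : Matrix (Fin n) (Fin n) F) (B : Matrix (Fin n) (Fin n) F)).rank = n := by
  rw [freeCyclic_iff_vecMul, ← rank_fromCols_eq_card_height_iff, Fintype.card_fin]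

theorem Outlier.not_unimodular {A B : Tri F n} (h : Outlier A B) : ¬ Unimodular A B :=
  fun hAB => h ⟨A, B, hAB, 1, by simp⟩

theorem Unimodular.mul_left {C D R : Tri F n} (hCD : Unimodular C D) (hR : IsUnit R) :
    Unimodular (R * C) (R * D) := by
  obtain ⟨X, Y, hXY⟩ := hCD
  refine ⟨X, Y, ?_⟩
  rw [mul_assoc, mul_assoc, ← mul_add]
  exact hR.mul hXY

theorem outlier_of_rank_fromCols_eq {A B : Tri F n} (hAB : ¬ Unimodular A B)
    (hrank : (fromCols (A : Matrix (Fin n) (Fin n) F) (B : Matrix (Fin n) (Fin n) F)).rank = n) :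
    Outlier A B := by
  rintro ⟨C, D, hCD, R, hfac⟩
  obtain ⟨rfl, rfl⟩ := Prod.mk.inj hfac
  rw [Subring.coe_mul, Subring.coe_mul, ← mul_fromCols] at hrank
  have hR : IsUnit (R : Matrix (Fin n) (Fin n) F) :=
    isUnit_of_rank_mul_eq_card_height (hrank.trans (Fintype.card_fin n).symm)
  exact hAB (hCD.mul_left (Tri.isUnit_of_isUnit_coe hR))

end

theorem outlier_generating_free_iff_general
    {F : Type*} [Field F] {n : ℕ} (A B : Tri F n) :
    (Outlier A B ∧ ∀ R : Tri F n, R * A = 0 → R * B = 0 → R = 0) ↔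
      (¬ Unimodular A B ∧
        (Matrix.fromCols (A : Matrix (Fin n) (Fin n) F)
          (B : Matrix (Fin n) (Fin n) F)).rank = n) := by
  change Outlier A B ∧ FreeCyclic A B ↔ _
  rw [freeCyclic_iff_rank_fromCols_eq]
  exact ⟨fun ⟨hout, hrank⟩ => ⟨hout.not_unimodular, hrank⟩,
    fun ⟨hAB, hrank⟩ => ⟨outlier_of_rank_fromCols_eq hAB hrank, hrank⟩⟩

/-- A pair `(A,B) ∈ ²T_n` is an outlier generating a free cyclic
submodule if and only if `(A,B)` is not unimodular and the rank of the `n × 2n`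
matrix `[A|B]` equals `n`. -/
theorem outlier_generating_free_iff
    {F : Type*} [Field F] {n : ℕ} (hn : 1 ≤ n) (A B : Tri F n) :
    (Outlier A B ∧ ∀ R : Tri F n, R * A = 0 → R * B = 0 → R = 0) ↔
      (¬ Unimodular A B ∧
        (Matrix.fromCols (A : Matrix (Fin n) (Fin n) F)
          (B : Matrix (Fin n) (Fin n) F)).rank = n) :=
  outlier_generating_free_iff_general A B
end

section
/- Let F be a field, n ≥ 2, and T_n the ring of lower triangular n×n matrices over F. If (A,B) ∈ ²T_n is a canonical pair, then the cyclic submodule T_n(A,B) is free. -/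
/-- A pair `(A,B) ∈ ²T_n` is canonical if for all `i` and all `j < i`:
`A i i ∈ {0,1}`, `B i j ∈ {0,1}`, `A i j = 0` and `B i i = 0`, and moreover the number of
nonzero entries of the `n × 2n` matrix `[A|B]` equals the rank of `[A|B]`, which is `n`. -/
def IsCanonical {F : Type*} [Field F] {n : ℕ} (A B : Tri F n) : Prop :=
  (∀ i : Fin n, A.val i i = 0 ∨ A.val i i = 1) ∧
  (∀ i j : Fin n, j < i → (B.val i j = 0 ∨ B.val i j = 1)) ∧
  (∀ i j : Fin n, j < i → A.val i j = 0) ∧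
  (∀ i : Fin n, B.val i i = 0) ∧
  {p : Fin n × (Fin n ⊕ Fin n) |
    Matrix.fromCols A.val B.val p.1 p.2 ≠ 0}.ncard = n ∧
  (Matrix.fromCols A.val B.val).rank = n

namespace Matrix

variable {l m k F : Type*} [Fintype m] [Fintype k] [Field F]

theorem eq_zero_of_rank_eq_zero [Finite l] {R : Matrix l m F} (h : R.rank = 0) : R = 0 := by
  rw [rank_eq_finrank_span_row, Submodule.finrank_eq_zero, Submodule.span_eq_bot] at h
  ext i j
  simpa using congrFun (h _ ⟨i, rfl⟩) j

theorem eq_zero_of_mul_eq_zero_of_rank_eq_card [Finite l] {R : Matrix l m F} {M : Matrix m k F}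
    (hM : M.rank = Fintype.card m) (h : R * M = 0) : R = 0 :=
  eq_zero_of_rank_eq_zero (by have := rank_add_rank_le_card_of_mul_eq_zero h; omega)

end Matrix

theorem canonical_generates_free_general
    {F : Type*} [Field F] {n : ℕ} (A B : Tri F n)
    (hAB : IsCanonical A B) :
    ∀ R : Tri F n, R * A = 0 → R * B = 0 → R = 0 := by
  intro R hRA hRB
  obtain ⟨-, -, -, -, -, hrank⟩ := hAB
  have hRAB : R.val * Matrix.fromCols A.val B.val = 0 := by
    rw [Matrix.mul_fromCols, ← Subring.coe_mul, ← Subring.coe_mul, hRA, hRB]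
    exact Matrix.fromCols_zero
  exact Subtype.ext <|
    Matrix.eq_zero_of_mul_eq_zero_of_rank_eq_card (hrank.trans (Fintype.card_fin n).symm) hRAB

/-- If `(A,B) ∈ ²T_n` (`n ≥ 2`) is a canonical pair, then the cyclic
submodule `T_n(A,B)` is free, i.e. `R ∈ T_n` with `RA = 0` and `RB = 0` implies `R = 0`. -/
theorem canonical_generates_free
    {F : Type*} [Field F] {n : ℕ} (hn : 2 ≤ n) (A B : Tri F n)
    (hAB : IsCanonical A B) :
    ∀ R : Tri F n, R * A = 0 → R * B = 0 → R = 0 :=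
  canonical_generates_free_general A B hAB
end

section
/- Let F be a field, n ≥ 2, and T_n the ring of lower triangular n×n matrices over F. Let (A,B) and (C,D) be canonical pairs in ²T_n. If there exists an invertible 2×2 matrix g = [[X,Y],[W,Z]] over T_n such that the cyclic submodules T_n(AX+BW, AY+BZ) and T_n(C,D) are equal (that is, T_n(A,B) and T_n(C,D) lie in the same GL_2(T_n)-orbit), then (A,B) = (C,D). Consequently, distinct canonical pairs represent distinct GL_2(T_n)-orbits of free cyclic submodules. -/
/-!
Every row of `[A|B]` for a canonical pair is a standard basis vector `e_{σ i}`, where `σ i` is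
either column `i` of `A` or column `j < i` of `B`. Let `G` be the `2n × 2n` matrix with blocks
`g`, and suppose `[C|D]` selects the columns `τ`. Equality of the orbits gives lower triangular
`R`, `S` with `[A|B] G = R [C|D]` and `[C|D] = S [A|B] G`; cancelling `[C|D]` yields `S R = 1`,
so all diagonal entries of `R` and `S` are nonzero. Comparing entries `(k, τ k)` gives
`G (σ k) (τ k) = R k k ≠ 0`, and likewise `G⁻¹ (τ k) (σ k) = S k k ≠ 0`. All blocks of `G` and
`G⁻¹` are lower triangular, so `σ k` and `τ k` lie over the same index of `Fin n`, and among
the admissible columns of row `k` this forces `σ k = τ k`.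
-/

open Matrix Function OrderDual

section Selection

variable {α : Type*} [Semiring α] {l m ι κ : Type*} [DecidableEq ι]

variable (α) in
def rowSelection (σ : m → ι) : Matrix m ι α :=
  (1 : Matrix ι ι α).submatrix σ id

theorem rowSelection_mul [Fintype ι] (σ : m → ι) (N : Matrix ι κ α) :
    rowSelection α σ * N = N.submatrix σ id := by
  ext i j
  simp [rowSelection, mul_apply, one_apply]

theorem mul_rowSelection_apply [Fintype m] {σ : m → ι} (hσ : Injective σ) (M : Matrix l m α)
    (i : l) (k : m) : (M * rowSelection α σ) i (σ k) = M i k := by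
  classical
  simp [rowSelection, mul_apply, one_apply, hσ.eq_iff]

theorem mul_right_cancel_rowSelection [Fintype m] {σ : m → ι} (hσ : Injective σ)
    {M N : Matrix l m α} (h : M * rowSelection α σ = N * rowSelection α σ) : M = N := by
  ext i k
  rw [← mul_rowSelection_apply hσ M, ← mul_rowSelection_apply hσ N, h]

theorem apply_eq_of_rowSelection_mul_eq [Fintype ι] [Fintype m] {σ τ : m → ι}
    (hτ : Injective τ) {G : Matrix ι ι α} {M : Matrix m m α}
    (h : rowSelection α σ * G = M * rowSelection α τ) (k : m) : G (σ k) (τ k) = M k k := by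
  rw [← mul_rowSelection_apply hτ M, ← h, rowSelection_mul, submatrix_apply, id]

end Selection

theorem Matrix.existsUnique_ne_zero_of_ncard_eq {α m ι : Type*} [Zero α] [Finite m] [Finite ι]
    {M : Matrix m ι α} (hrow : ∀ i, M i ≠ 0)
    (hcard : {p : m × ι | M p.1 p.2 ≠ 0}.ncard = Nat.card m) (i : m) : ∃! q, M i q ≠ 0 := by
  set S := {p : m × ι | M p.1 p.2 ≠ 0}
  have hsurj : Surjective fun p : S => p.1.1 := fun i => by
    obtain ⟨q, hq⟩ := Function.ne_iff.mp (hrow i)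
    exact ⟨⟨(i, q), hq⟩, rfl⟩
  have hinj := (hsurj.bijective_of_nat_card_le (by rw [Nat.card_coe_set_eq, hcard])).injective
  obtain ⟨⟨⟨_, q⟩, hq⟩, rfl⟩ := hsurj i
  exact ⟨q, hq, fun q' hq' => congrArg (·.1.2) (@hinj ⟨(_, q'), hq'⟩ ⟨(_, q), hq⟩ rfl)⟩

theorem Matrix.diag_ne_zero_of_mul_eq_one {K m : Type*} [Field K] [Fintype m] [DecidableEq m]
    [LinearOrder m] {R S : Matrix m m K} (hR : R.IsLowerTriangular) (h : S * R = 1) (k : m) :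
    R k k ≠ 0 := by
  have hdet : R.det ≠ 0 := (isUnit_det_of_left_inverse h).ne_zero
  rw [det_of_isLowerTriangular R hR] at hdet
  exact Finset.prod_ne_zero_iff.mp hdet k (Finset.mem_univ k)

theorem Sum.eq_of_elim_id_eq {α : Type*} [LinearOrder α] {k : α} {p q : α ⊕ α}
    (hp : p.elim (· = k) (· < k)) (hq : q.elim (· = k) (· < k))
    (h : p.elim id id = q.elim id id) : p = q := by
  rcases p with a | a <;> rcases q with b | b <;>
    simp only [Sum.elim_inl, Sum.elim_inr, id] at hp hq h
  · rw [hp, hq]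
  · exact absurd hq (h ▸ hp ▸ lt_irrefl k)
  · exact absurd hp (h ▸ hq ▸ lt_irrefl k)
  · rw [h]

section TriangularMatrices

variable {F : Type*} [Field F] {n : ℕ}

namespace IsCanonical

variable {A B : Tri F n}

theorem elim_of_fromCols_ne_zero (h : IsCanonical A B) {i : Fin n} {q : Fin n ⊕ Fin n}
    (hq : fromCols A.val B.val i q ≠ 0) : q.elim (· = i) (· < i) := by
  obtain ⟨-, -, hAl, hBd, -⟩ := h
  rcases q with j | j <;> rcases lt_trichotomy j i with hji | rfl | hij
  · exact absurd (hAl i j hji) hq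
  · rfl
  · exact absurd (A.prop i j hij) hq
  · exact hji
  · exact absurd (hBd j) hq
  · exact absurd (B.prop i j hij) hq

theorem fromCols_eq_zero_or_one (h : IsCanonical A B) (i : Fin n) (q : Fin n ⊕ Fin n) :
    fromCols A.val B.val i q = 0 ∨ fromCols A.val B.val i q = 1 := by
  rcases eq_or_ne (fromCols A.val B.val i q) 0 with h0 | h0
  · exact Or.inl h0
  have hq := h.elim_of_fromCols_ne_zero h0
  obtain ⟨hAd, hBl, -⟩ := h
  rcases q with j | j
  · obtain rfl : j = i := hq
    exact hAd j
  · exact hBl i j hq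

theorem linearIndependent_row (h : IsCanonical A B) :
    LinearIndependent F (fromCols A.val B.val).row := by
  obtain ⟨-, -, -, -, -, hrank⟩ := h
  rw [linearIndependent_iff_card_eq_finrank_span, Fintype.card_fin, Set.finrank,
    ← rank_eq_finrank_span_row, hrank]

theorem existsUnique_fromCols_ne_zero (h : IsCanonical A B) (i : Fin n) :
    ∃! q, fromCols A.val B.val i q ≠ 0 := by
  refine existsUnique_ne_zero_of_ncard_eq h.linearIndependent_row.ne_zero ?_ i
  obtain ⟨-, -, -, -, hcard, -⟩ := h
  rwa [Nat.card_fin]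

theorem exists_fromCols_eq_rowSelection (h : IsCanonical A B) :
    ∃ σ : Fin n → Fin n ⊕ Fin n, Injective σ ∧ (∀ i, (σ i).elim (· = i) (· < i)) ∧
      fromCols A.val B.val = rowSelection F σ := by
  choose σ hσ huniq using h.existsUnique_fromCols_ne_zero
  have hM : fromCols A.val B.val = rowSelection F σ := by
    ext i q
    rw [rowSelection, submatrix_apply, id, one_apply]
    split_ifs with hq
    · subst hq
      exact (h.fromCols_eq_zero_or_one i _).resolve_left (hσ i)
    · by_contra hne
      exact hq (huniq i q hne).symm
  refine ⟨σ, fun i j hij => h.linearIndependent_row.injective ?_,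
    fun i => h.elim_of_fromCols_ne_zero (hσ i), hM⟩
  ext q
  simp only [hM, row, rowSelection, submatrix_apply]
  rw [hij]

end IsCanonical

def blockMatrix (g : Matrix (Fin 2) (Fin 2) (Tri F n)) :
    Matrix (Fin n ⊕ Fin n) (Fin n ⊕ Fin n) F :=
  fromBlocks (g 0 0).val (g 0 1).val (g 1 0).val (g 1 1).val

theorem blockMatrix_mul (g h : Matrix (Fin 2) (Fin 2) (Tri F n)) :
    blockMatrix (g * h) = blockMatrix g * blockMatrix h := by
  simp [blockMatrix, fromBlocks_multiply, mul_apply, Fin.sum_univ_two]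

theorem blockMatrix_one : blockMatrix (1 : Matrix (Fin 2) (Fin 2) (Tri F n)) = 1 := by
  simp [blockMatrix, one_apply]

theorem blockTriangular_blockMatrix (g : Matrix (Fin 2) (Fin 2) (Tri F n)) :
    (blockMatrix g).BlockTriangular (toDual ∘ Sum.elim id id) := by
  rintro (i | i) (j | j) hij
  · exact (g 0 0).prop i j hij
  · exact (g 0 1).prop i j hij
  · exact (g 1 0).prop i j hij
  · exact (g 1 1).prop i j hij

theorem fromCols_mul_blockMatrix (A B : Tri F n) (g : Matrix (Fin 2) (Fin 2) (Tri F n)) :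
    fromCols A.val B.val * blockMatrix g =
      fromCols (A * g 0 0 + B * g 1 0).val (A * g 0 1 + B * g 1 1).val := by
  simp [blockMatrix, fromCols_mul_fromBlocks]

theorem self_mem_cyc (A B : Tri F n) : (A, B) ∈ cyc A B :=
  ⟨1, by simp⟩

theorem exists_fromCols_eq_mul_of_mem_cyc {P Q C D : Tri F n} (h : (P, Q) ∈ cyc C D) :
    ∃ R : Tri F n, fromCols P.val Q.val = R.val * fromCols C.val D.val := by
  obtain ⟨R, hR⟩ := h
  obtain ⟨rfl, rfl⟩ := Prod.ext_iff.mp hR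
  exact ⟨R, by simp [mul_fromCols]⟩

theorem eq_of_rowSelection_mul_eq {σ τ : Fin n → Fin n ⊕ Fin n} (hσ : Injective σ)
    (hτ : Injective τ) (hσ' : ∀ k, (σ k).elim (· = k) (· < k))
    (hτ' : ∀ k, (τ k).elim (· = k) (· < k)) {G H : Matrix (Fin n ⊕ Fin n) (Fin n ⊕ Fin n) F}
    (hG : G.BlockTriangular (toDual ∘ Sum.elim id id))
    (hH : H.BlockTriangular (toDual ∘ Sum.elim id id)) (hGH : G * H = 1)
    {R S : Matrix (Fin n) (Fin n) F} (hR : R.IsLowerTriangular) (hS : S.IsLowerTriangular)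
    (hRG : rowSelection F σ * G = R * rowSelection F τ)
    (hSG : rowSelection F τ = S * (rowSelection F σ * G)) : σ = τ := by
  have hSR : S * R = 1 := mul_right_cancel_rowSelection hτ <| by
    rw [Matrix.mul_assoc, ← hRG, ← hSG, Matrix.one_mul]
  have hHS : rowSelection F τ * H = S * rowSelection F σ := by
    rw [hSG, Matrix.mul_assoc, Matrix.mul_assoc, hGH, Matrix.mul_one]
  funext k
  refine Sum.eq_of_elim_id_eq (hσ' k) (hτ' k) (le_antisymm ?_ ?_)
  · refine not_lt.mp fun hlt => diag_ne_zero_of_mul_eq_one hS (mul_eq_one_comm.mp hSR) k ?_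
    rw [← apply_eq_of_rowSelection_mul_eq hσ hHS k]
    exact hH hlt
  · refine not_lt.mp fun hlt => diag_ne_zero_of_mul_eq_one hR hSR k ?_
    rw [← apply_eq_of_rowSelection_mul_eq hτ hRG k]
    exact hG hlt

end TriangularMatrices

theorem canonical_pairs_distinct_orbits_general
    {F : Type*} [Field F] {n : ℕ} (A B C D : Tri F n)
    (hAB : IsCanonical A B) (hCD : IsCanonical C D)
    (h : ∃ g : Matrix (Fin 2) (Fin 2) (Tri F n), IsUnit g ∧
      cyc (A * g 0 0 + B * g 1 0) (A * g 0 1 + B * g 1 1) = cyc C D) :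
    A = C ∧ B = D := by
  obtain ⟨g, hg, hcyc⟩ := h
  obtain ⟨g', hgg', -⟩ := isUnit_iff_exists.mp hg
  obtain ⟨σ, hσ, hσ', hAB⟩ := hAB.exists_fromCols_eq_rowSelection
  obtain ⟨τ, hτ, hτ', hCD⟩ := hCD.exists_fromCols_eq_rowSelection
  obtain ⟨R, hR⟩ := exists_fromCols_eq_mul_of_mem_cyc (hcyc ▸ self_mem_cyc _ _)
  obtain ⟨S, hS⟩ := exists_fromCols_eq_mul_of_mem_cyc (hcyc ▸ self_mem_cyc C D)
  rw [← fromCols_mul_blockMatrix, hAB, hCD] at hR hS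
  have hστ : σ = τ := eq_of_rowSelection_mul_eq hσ hτ hσ' hτ' (blockTriangular_blockMatrix g)
    (blockTriangular_blockMatrix g') (by rw [← blockMatrix_mul, hgg', blockMatrix_one])
    R.prop S.prop hR hS
  obtain ⟨hAC, hBD⟩ := (fromCols_ext_iff _ _ _ _).mp (hAB.trans (hστ ▸ hCD.symm))
  exact ⟨Subtype.ext hAC, Subtype.ext hBD⟩

/-- Let `(A,B)` and `(C,D)` be canonical pairs in `²T_n` (`n ≥ 2`).
If there is an invertible `2 × 2` matrix `g = [[X,Y],[W,Z]]` over `T_n` such that the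
cyclic submodules `T_n(AX + BW, AY + BZ)` and `T_n(C,D)` coincide — that is, `T_n(A,B)`
and `T_n(C,D)` lie in the same `GL_2(T_n)`-orbit — then `(A,B) = (C,D)`. -/
theorem canonical_pairs_distinct_orbits
    {F : Type*} [Field F] {n : ℕ} (hn : 2 ≤ n) (A B C D : Tri F n)
    (hAB : IsCanonical A B) (hCD : IsCanonical C D)
    (h : ∃ g : Matrix (Fin 2) (Fin 2) (Tri F n), IsUnit g ∧
      cyc (A * g 0 0 + B * g 1 0) (A * g 0 1 + B * g 1 1) = cyc C D) :
    A = C ∧ B = D :=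
  canonical_pairs_distinct_orbits_general A B C D hAB hCD h
end

section
/- Let F be a field, n ≥ 2, and T_n the ring of lower triangular n×n matrices over F. The set of canonical pairs (A,B) ∈ ²T_n is in bijection with the set of partitions of the set {1, 2, …, n}; in particular, the number of canonical pairs equals the Bell number B_n. -/
open Function Matrix Finset

theorem Set.exists_eq_range_graph_of_ncard_le {m κ : Type*} [Finite m] [Finite κ]
    {S : Set (m × κ)} (hS : ∀ i, ∃ k, (i, k) ∈ S) (hcard : S.ncard ≤ Nat.card m) :
    ∃ c : m → κ, S = Set.range fun i => (i, c i) := by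
  choose c hc using hS
  refine ⟨c, (Set.eq_of_subset_of_ncard_le ?_ ?_).symm⟩
  · rintro _ ⟨i, rfl⟩
    exact hc i
  · rwa [Set.ncard_range_of_injective fun i j h => congrArg Prod.fst h]

namespace Matrix

variable {m κ R K : Type*}

theorem linearIndependent_row_of_rank_eq_card [Field K] [Fintype m] [Fintype κ]
    {M : Matrix m κ K} (h : M.rank = Fintype.card m) : LinearIndependent K M.row := by
  rw [linearIndependent_iff_card_eq_finrank_span, Set.finrank, ← rank_eq_finrank_span_row, h]

variable [DecidableEq κ]

def ofPiSingle [Zero R] [One R] (c : m → κ) : Matrix m κ R :=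
  of fun i => Pi.single (c i) 1

theorem ofPiSingle_apply [Zero R] [One R] (c : m → κ) (i : m) (k : κ) :
    (ofPiSingle c : Matrix m κ R) i k = if k = c i then 1 else 0 :=
  Pi.single_apply _ _ _

theorem ofPiSingle_apply_eq_zero_or_eq_one [Zero R] [One R] (c : m → κ) (i : m) (k : κ) :
    (ofPiSingle c : Matrix m κ R) i k = 0 ∨ (ofPiSingle c : Matrix m κ R) i k = 1 := by
  rw [ofPiSingle_apply]
  split_ifs <;> simp

theorem ofPiSingle_apply_ne_zero_iff [Zero R] [One R] [NeZero (1 : R)] {c : m → κ} {i : m}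
    {k : κ} : (ofPiSingle c : Matrix m κ R) i k ≠ 0 ↔ k = c i := by
  rw [ofPiSingle_apply]
  split_ifs <;> simp [*]

theorem ofPiSingle_injective [Zero R] [One R] [NeZero (1 : R)] :
    Injective (ofPiSingle : (m → κ) → Matrix m κ R) := fun c d h => funext fun i =>
  ofPiSingle_apply_ne_zero_iff.mp (by rw [← h, ofPiSingle_apply_ne_zero_iff] :
    (ofPiSingle d : Matrix m κ R) i (c i) ≠ 0)

theorem support_ofPiSingle [Zero R] [One R] [NeZero (1 : R)] (c : m → κ) :
    {p : m × κ | (ofPiSingle c : Matrix m κ R) p.1 p.2 ≠ 0} = Set.range fun i => (i, c i) := by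
  ext ⟨i, k⟩
  simp only [Set.mem_ofPred_eq, ofPiSingle_apply_ne_zero_iff, Set.mem_range, Prod.mk.injEq]
  exact ⟨fun h => ⟨i, rfl, h.symm⟩, fun ⟨_, hi, hk⟩ => hi ▸ hk.symm⟩

theorem rank_ofPiSingle [Field K] [Fintype m] [Fintype κ] {c : m → κ} (hc : Injective c) :
    (ofPiSingle c : Matrix m κ K).rank = Fintype.card m := by
  refine LinearIndependent.rank_matrix ?_
  convert (Pi.basisFun K κ).linearIndependent.comp c hc
  ext i k
  simp [row, ofPiSingle]

theorem exists_injective_eq_ofPiSingle [Field K] [Fintype m] [Fintype κ] {M : Matrix m κ K}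
    (hrank : M.rank = Fintype.card m)
    (hcard : {p : m × κ | M p.1 p.2 ≠ 0}.ncard ≤ Fintype.card m)
    (hone : ∀ i k, M i k ≠ 0 → M i k = 1) :
    ∃ c : m → κ, Injective c ∧ M = ofPiSingle c := by
  have hli := linearIndependent_row_of_rank_eq_card hrank
  have hrow : ∀ i, ∃ k, M i k ≠ 0 := fun i => by
    by_contra! h
    exact hli.ne_zero i (funext h)
  obtain ⟨c, hc⟩ :=
    Set.exists_eq_range_graph_of_ncard_le (S := {p : m × κ | M p.1 p.2 ≠ 0}) hrow
    (by rwa [Nat.card_eq_fintype_card])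
  have hsupp (i : m) (k : κ) : M i k ≠ 0 ↔ k = c i := by
    simpa [eq_comm] using Set.ext_iff.mp hc (i, k)
  have hM : M = ofPiSingle c := by
    ext i k
    rw [ofPiSingle_apply]
    split_ifs with hk
    · exact hone i k ((hsupp i k).mpr hk)
    · exact not_not.mp (mt (hsupp i k).mp hk)
  subst hM
  exact ⟨c, fun a b hab => hli.injective (congrArg (fun k => Pi.single k (1 : K)) hab), rfl⟩

end Matrix

theorem Finpartition.eq_of_part_eq {α : Type*} [DecidableEq α] {s : Finset α}
    {P Q : Finpartition s} (h : ∀ a, P.part a = Q.part a) : P = Q := by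
  suffices ∀ {P Q : Finpartition s}, (∀ a, P.part a = Q.part a) → P.parts ⊆ Q.parts from
    Finpartition.ext (Finset.Subset.antisymm (this h) (this fun a => (h a).symm))
  intro P Q h t ht
  obtain ⟨x, hx⟩ := P.nonempty_of_mem_parts ht
  rw [← P.part_eq_of_mem ht hx, h]
  exact Q.part_mem.2 (P.le ht hx)

instance {α β : Type*} [DecidableEq β] (f : α → β) : DecidableRel (Setoid.ker f) :=
  fun _ _ => decidable_of_iff _ Setoid.ker_def.symm

namespace CanonicalPair

variable {n : ℕ}

def IsParent (f : Fin n → Fin n) : Prop :=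
  f ≤ id ∧ Set.InjOn f {i | f i ≠ i}

section Root

variable {f : Fin n → Fin n}

theorem apply_iterate_eq_of_le (hf : f ≤ id) {i : Fin n} {k : ℕ} (hk : (i : ℕ) ≤ k) :
    f (f^[k] i) = f^[k] i := by
  induction i using WellFoundedLT.induction generalizing k with
  | _ i ih =>
  have hi : f i ≤ i := hf i
  rcases hi.eq_or_lt with h | h
  · rw [iterate_fixed h]
    exact h
  · have h' : (f i : ℕ) < i := h
    obtain ⟨k, rfl⟩ : ∃ k', k = k' + 1 := ⟨k - 1, by omega⟩
    rw [iterate_succ_apply]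
    exact ih _ h (by omega)

theorem iterate_card_apply (hf : f ≤ id) (i : Fin n) : f^[n] (f i) = f^[n] i := by
  rw [← iterate_succ_apply, iterate_succ_apply', apply_iterate_eq_of_le hf i.isLt.le]

theorem apply_ne_self_of_lt (hf : f ≤ id) {x y : Fin n} (hr : f^[n] x = f^[n] y) (hxy : x < y) :
    f y ≠ y := fun h => by
  rw [iterate_fixed h] at hr
  exact (hr ▸ iterate_le_id_of_le_id hf n x).not_gt hxy

/-- Chains `y > f y > f (f y) > ⋯` of a parent function with a common end never interleave. -/
theorem IsParent.le_apply_of_lt (hf : IsParent f) {x y : Fin n} (hr : f^[n] x = f^[n] y)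
    (hxy : x < y) : x ≤ f y := by
  induction x using WellFoundedLT.induction generalizing y with
  | _ x ih =>
  by_contra! hyx
  have hx : f x ≠ x := fun h => by
    rw [iterate_fixed h, ← iterate_card_apply hf.1] at hr
    exact (hr ▸ iterate_le_id_of_le_id hf.1 n (f y)).not_gt hyx
  have hfx : f x < x := (hf.1 x : f x ≤ x).lt_of_ne hx
  have h₁ : f y ≤ f x := ih _ hyx (by rw [iterate_card_apply hf.1, hr]) hyx
  have h₂ : f x ≤ f y := ih _ hfx (by rw [iterate_card_apply hf.1, hr]) (hfx.trans hxy)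
  exact hxy.ne (hf.2 hx (hyx.trans hxy).ne (le_antisymm h₂ h₁))

end Root

section BlockPred

variable (Q : Finpartition (univ : Finset (Fin n)))

def blockPred (i : Fin n) : Fin n :=
  if h : ((Q.part i).filter (· < i)).Nonempty then ((Q.part i).filter (· < i)).max' h else i

variable {Q}

theorem blockPred_mem_part (i : Fin n) : blockPred Q i ∈ Q.part i := by
  unfold blockPred
  split_ifs with h
  · exact (mem_filter.mp (max'_mem _ h)).1
  · exact Q.mem_part (mem_univ i)

theorem part_blockPred (i : Fin n) : Q.part (blockPred Q i) = Q.part i :=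
  (Q.mem_part_iff_part_eq_part (mem_univ _) (mem_univ _)).mp (blockPred_mem_part i)

theorem blockPred_le (i : Fin n) : blockPred Q i ≤ i := by
  unfold blockPred
  split_ifs with h
  · exact (mem_filter.mp (max'_mem _ h)).2.le
  · exact le_rfl

theorem le_blockPred {i j : Fin n} (hj : j ∈ Q.part i) (hji : j < i) : j ≤ blockPred Q i := by
  have hmem : j ∈ (Q.part i).filter (· < i) := mem_filter.mpr ⟨hj, hji⟩
  rw [blockPred, dif_pos ⟨j, hmem⟩]
  exact le_max' _ j hmem

theorem blockPred_eq_self_iff {i : Fin n} : blockPred Q i = i ↔ ∀ j ∈ Q.part i, ¬ j < i := by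
  unfold blockPred
  split_ifs with h
  · refine iff_of_false (mem_filter.mp (max'_mem _ h)).2.ne fun H => ?_
    obtain ⟨j, hj⟩ := h
    exact H j (mem_filter.mp hj).1 (mem_filter.mp hj).2
  · simpa [filter_nonempty_iff] using h

theorem le_of_blockPred_eq_self {i j : Fin n} (h : blockPred Q i = i) (hj : Q.part j = Q.part i) :
    i ≤ j :=
  not_lt.mp (blockPred_eq_self_iff.mp h j (hj ▸ Q.mem_part (mem_univ j)))

theorem not_lt_of_blockPred_eq {a b : Fin n} (h : blockPred Q a = blockPred Q b)
    (ha : blockPred Q a ≠ a) : ¬ a < b := fun hlt => by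
  have hab : a ∈ Q.part b := by
    rw [Q.mem_part_iff_part_eq_part (mem_univ _) (mem_univ _), ← part_blockPred a, h,
      part_blockPred]
  exact ((blockPred_le a).lt_of_ne ha).not_ge (h ▸ le_blockPred hab hlt)

theorem isParent_blockPred : IsParent (blockPred Q) :=
  ⟨blockPred_le, fun _ hx _ hy hxy => le_antisymm (not_lt.mp (not_lt_of_blockPred_eq hxy.symm hy))
    (not_lt.mp (not_lt_of_blockPred_eq hxy hx))⟩

theorem part_iterate_blockPred (i : Fin n) (k : ℕ) : Q.part ((blockPred Q)^[k] i) = Q.part i := by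
  induction k with
  | zero => rfl
  | succ k ih => rw [iterate_succ_apply', part_blockPred, ih]

theorem iterate_card_blockPred_eq_iff {a b : Fin n} :
    (blockPred Q)^[n] a = (blockPred Q)^[n] b ↔ Q.part a = Q.part b := by
  refine ⟨fun h => by rw [← part_iterate_blockPred a n, h, part_iterate_blockPred],
    fun h => ?_⟩
  have hfix (x : Fin n) : blockPred Q ((blockPred Q)^[n] x) = (blockPred Q)^[n] x :=
    apply_iterate_eq_of_le blockPred_le x.isLt.le
  have hpart : Q.part ((blockPred Q)^[n] a) = Q.part ((blockPred Q)^[n] b) := by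
    rw [part_iterate_blockPred, part_iterate_blockPred, h]
  exact le_antisymm (le_of_blockPred_eq_self (hfix a) hpart.symm)
    (le_of_blockPred_eq_self (hfix b) hpart)

end BlockPred

/-- `f^[n] i` is the end of the chain `i ≥ f i ≥ ⋯`, the least element of the block of `i`. -/
def rootPartition (f : Fin n → Fin n) : Finpartition (univ : Finset (Fin n)) :=
  Finpartition.ofSetoid (Setoid.ker f^[n])

theorem mem_part_rootPartition {f : Fin n → Fin n} {a b : Fin n} :
    b ∈ (rootPartition f).part a ↔ f^[n] a = f^[n] b := by
  rw [rootPartition, Finpartition.mem_part_ofSetoid_iff_rel, Setoid.ker_def]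

theorem blockPred_rootPartition {f : Fin n → Fin n} (hf : IsParent f) :
    blockPred (rootPartition f) = f := by
  funext i
  have hi : f i ≤ i := hf.1 i
  rcases hi.eq_or_lt with hfix | hlt
  · rw [hfix, blockPred_eq_self_iff]
    exact fun j hj hji => apply_ne_self_of_lt hf.1 (mem_part_rootPartition.mp hj).symm hji hfix
  · have hmem : f i ∈ (rootPartition f).part i :=
      mem_part_rootPartition.mpr (iterate_card_apply hf.1 i).symm
    refine le_antisymm ?_ (le_blockPred hmem hlt)
    have hpred_lt : blockPred (rootPartition f) i < i :=
      (blockPred_le i).lt_of_ne fun h => blockPred_eq_self_iff.mp h _ hmem hlt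
    exact hf.le_apply_of_lt (mem_part_rootPartition.mp (blockPred_mem_part i)).symm hpred_lt

theorem rootPartition_blockPred (Q : Finpartition (univ : Finset (Fin n))) :
    rootPartition (blockPred Q) = Q := by
  refine Finpartition.eq_of_part_eq fun a => Finset.ext fun b => ?_
  rw [mem_part_rootPartition, iterate_card_blockPred_eq_iff,
    Q.mem_part_iff_part_eq_part (mem_univ _) (mem_univ _), eq_comm]

def parentEquivFinpartition :
    {f : Fin n → Fin n // IsParent f} ≃ Finpartition (univ : Finset (Fin n)) where
  toFun f := rootPartition f.1
  invFun Q := ⟨blockPred Q, isParent_blockPred⟩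
  left_inv f := Subtype.ext (blockPred_rootPartition f.2)
  right_inv := rootPartition_blockPred

section Columns

variable {f : Fin n → Fin n}

def parentCol (f : Fin n → Fin n) (i : Fin n) : Fin n ⊕ Fin n :=
  if f i = i then .inl i else .inr (f i)

theorem parentCol_eq_inl_iff {i j : Fin n} : parentCol f i = .inl j ↔ f i = i ∧ i = j := by
  unfold parentCol
  split_ifs <;> simp [*]

theorem parentCol_eq_inr_iff {i j : Fin n} : parentCol f i = .inr j ↔ f i ≠ i ∧ f i = j := by
  unfold parentCol
  split_ifs <;> simp [*]

theorem sum_elim_parentCol (f : Fin n → Fin n) (i : Fin n) :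
    Sum.elim id id (parentCol f i) = f i := by
  unfold parentCol
  split_ifs with h <;> simp [h]

theorem parentCol_injective (hf : IsParent f) : Injective (parentCol f) := by
  intro a b hab
  unfold parentCol at hab
  split_ifs at hab with ha hb hb
  · exact Sum.inl.inj hab
  · exact hf.2 ha hb (Sum.inr.inj hab)

theorem exists_parentCol_eq {c : Fin n → Fin n ⊕ Fin n} (hc : Injective c)
    (hshape : ∀ i, c i = .inl i ∨ ∃ j < i, c i = .inr j) :
    ∃ f, IsParent f ∧ parentCol f = c := by
  set f : Fin n → Fin n := fun i => Sum.elim id id (c i)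
  have hcol : parentCol f = c := funext fun i => by
    rcases hshape i with h | ⟨j, hj, h⟩
    · rw [h, parentCol_eq_inl_iff]
      simp [f, h]
    · rw [h, parentCol_eq_inr_iff]
      simp [f, h, hj.ne]
  refine ⟨f, ⟨fun i => ?_, fun a ha b hb hab => hc ?_⟩, hcol⟩
  · rcases hshape i with h | ⟨j, hj, h⟩
    · simp [f, h]
    · simpa [f, h] using hj.le
  · rw [← hcol, parentCol_eq_inr_iff.mpr ⟨ha, rfl⟩, parentCol_eq_inr_iff.mpr ⟨hb, rfl⟩,
      hab]

end Columns

section Canonical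

variable (F : Type*) [Field F]

def parentMatrix (f : Fin n → Fin n) : Matrix (Fin n) (Fin n ⊕ Fin n) F :=
  ofPiSingle (parentCol f)

variable {F}

theorem parentMatrix_inl_eq_zero {f : Fin n → Fin n} {i j : Fin n} (hij : i ≠ j) :
    parentMatrix F f i (.inl j) = 0 := by
  rw [← not_ne_iff, parentMatrix, ofPiSingle_apply_ne_zero_iff, eq_comm, parentCol_eq_inl_iff]
  exact fun h => hij h.2

theorem parentMatrix_inr_eq_zero {f : Fin n → Fin n} (hf : f ≤ id) {i j : Fin n}
    (hij : i ≤ j) :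
    parentMatrix F f i (.inr j) = 0 := by
  rw [← not_ne_iff, parentMatrix, ofPiSingle_apply_ne_zero_iff, eq_comm, parentCol_eq_inr_iff]
  exact fun h => h.1 (le_antisymm (hf i) (h.2 ▸ hij))

theorem toCols₁_parentMatrix_mem (f : Fin n → Fin n) :
    (parentMatrix F f).toCols₁ ∈ Tri F n :=
  fun _ _ hij => parentMatrix_inl_eq_zero hij.ne

theorem toCols₂_parentMatrix_mem {f : Fin n → Fin n} (hf : f ≤ id) :
    (parentMatrix F f).toCols₂ ∈ Tri F n :=
  fun _ _ hij => parentMatrix_inr_eq_zero hf hij.le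

theorem isCanonical_parentMatrix {f : Fin n → Fin n} (hf : IsParent f) :
    IsCanonical (⟨_, toCols₁_parentMatrix_mem f⟩ : Tri F n)
      ⟨_, toCols₂_parentMatrix_mem hf.1⟩ := by
  have hM := fromCols_toCols (parentMatrix F f)
  refine ⟨fun i => ofPiSingle_apply_eq_zero_or_eq_one _ i _,
    fun i j _ => ofPiSingle_apply_eq_zero_or_eq_one _ i _,
    fun _ _ hji => parentMatrix_inl_eq_zero hji.ne', fun _ => parentMatrix_inr_eq_zero hf.1 le_rfl,
    ?_, ?_⟩
  · rw [hM, parentMatrix, support_ofPiSingle,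
      Set.ncard_range_of_injective fun _ _ h => congrArg Prod.fst h, Nat.card_fin]
  · rw [hM, parentMatrix, rank_ofPiSingle (parentCol_injective hf), Fintype.card_fin]

theorem _root_.IsCanonical.fst_apply_of_ne_zero {A B : Tri F n} (h : IsCanonical A B)
    {i j : Fin n} (hne : A.val i j ≠ 0) : j = i ∧ A.val i j = 1 := by
  obtain rfl : j = i :=
    le_antisymm (not_lt.mp (mt (A.2 i j) hne)) (not_lt.mp (mt (h.2.2.1 i j) hne))
  exact ⟨rfl, (h.1 j).resolve_left hne⟩

theorem _root_.IsCanonical.snd_apply_of_ne_zero {A B : Tri F n} (h : IsCanonical A B)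
    {i j : Fin n} (hne : B.val i j ≠ 0) : j < i ∧ B.val i j = 1 := by
  have hji : j < i := (not_lt.mp (mt (B.2 i j) hne)).lt_of_ne fun hji => hne (hji ▸ h.2.2.2.1 j)
  exact ⟨hji, (h.2.1 i j hji).resolve_left hne⟩

theorem _root_.IsCanonical.exists_fromCols_eq_parentMatrix {A B : Tri F n} (h : IsCanonical A B) :
    ∃ f, IsParent f ∧ fromCols A.val B.val = parentMatrix F f := by
  obtain ⟨c, hc, hM⟩ := exists_injective_eq_ofPiSingle (M := fromCols A.val B.val)
    (by rw [h.2.2.2.2.2, Fintype.card_fin]) (by rw [h.2.2.2.2.1, Fintype.card_fin])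
    fun i k hne => by
      cases k with
      | inl j => exact (h.fst_apply_of_ne_zero hne).2
      | inr j => exact (h.snd_apply_of_ne_zero hne).2
  have hshape (i : Fin n) : c i = .inl i ∨ ∃ j < i, c i = .inr j := by
    have hne : fromCols A.val B.val i (c i) ≠ 0 := by rw [hM, ofPiSingle_apply_ne_zero_iff]
    cases hci : c i with
    | inl j =>
      rw [hci] at hne
      exact .inl (congrArg _ (h.fst_apply_of_ne_zero hne).1)
    | inr j =>
      rw [hci] at hne
      exact .inr ⟨j, (h.snd_apply_of_ne_zero hne).1, rfl⟩
  obtain ⟨f, hf, rfl⟩ := exists_parentCol_eq hc hshape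
  exact ⟨f, hf, hM⟩

variable (F) in
def toCanonicalPair (f : {f : Fin n → Fin n // IsParent f}) :
    {p : Tri F n × Tri F n // IsCanonical p.1 p.2} :=
  ⟨(⟨_, toCols₁_parentMatrix_mem f.1⟩, ⟨_, toCols₂_parentMatrix_mem f.2.1⟩),
    isCanonical_parentMatrix f.2⟩

theorem toCanonicalPair_injective : Injective (toCanonicalPair F (n := n)) := fun f g h => by
  have hM : parentMatrix F f.1 = parentMatrix F g.1 := by
    simpa only [toCanonicalPair, fromCols_toCols] using
      congrArg (fun p => fromCols p.1.1.val p.1.2.val) h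
  have hcol : parentCol f.1 = parentCol g.1 := ofPiSingle_injective hM
  exact Subtype.ext (funext fun i => by rw [← sum_elim_parentCol f.1 i, hcol, sum_elim_parentCol])

theorem toCanonicalPair_surjective : Surjective (toCanonicalPair F (n := n)) := by
  rintro ⟨⟨A, B⟩, h⟩
  obtain ⟨f, hf, hM⟩ := h.exists_fromCols_eq_parentMatrix
  exact ⟨⟨f, hf⟩, Subtype.ext (Prod.ext (Subtype.ext (congrArg toCols₁ hM.symm))
    (Subtype.ext (congrArg toCols₂ hM.symm)))⟩

variable (F n) in
noncomputable def parentEquivCanonicalPair :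
    {f : Fin n → Fin n // IsParent f} ≃ {p : Tri F n × Tri F n // IsCanonical p.1 p.2} :=
  Equiv.ofBijective (toCanonicalPair F) ⟨toCanonicalPair_injective, toCanonicalPair_surjective⟩

end Canonical

end CanonicalPair

theorem canonical_pairs_equiv_partitions_general
    {F : Type*} [Field F] {n : ℕ} :
    Nonempty ({p : Tri F n × Tri F n // IsCanonical p.1 p.2} ≃
        Finpartition (Finset.univ : Finset (Fin n))) ∧
      Nat.card {p : Tri F n × Tri F n // IsCanonical p.1 p.2} =
        Nat.card (Finpartition (Finset.univ : Finset (Fin n))) := by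
  let e := (CanonicalPair.parentEquivCanonicalPair n F).symm.trans
    CanonicalPair.parentEquivFinpartition
  exact ⟨⟨e⟩, Nat.card_congr e⟩

/-- The set of canonical pairs `(A,B) ∈ ²T_n` (`n ≥ 2`) is in bijection
with the set of partitions of `{1, …, n}`; in particular the number of canonical pairs
equals the Bell number `B_n`, the number of partitions of an `n`-element set. -/
theorem canonical_pairs_equiv_partitions
    {F : Type*} [Field F] {n : ℕ} (hn : 2 ≤ n) :
    Nonempty ({p : Tri F n × Tri F n // IsCanonical p.1 p.2} ≃
        Finpartition (Finset.univ : Finset (Fin n))) ∧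
      Nat.card {p : Tri F n × Tri F n // IsCanonical p.1 p.2} =
        Nat.card (Finpartition (Finset.univ : Finset (Fin n))) :=
  canonical_pairs_equiv_partitions_general
end
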